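/- Let z ≥ 2 and let f_i, f_j, f_k ∈ ℝ^z be probability vectors. Let R be the quadratic scoring rule R(f, e) = 2·f_e − Σ_{x=1}^{z} f_x², and let D(f, g) = sqrt( (Σ_{x=1}^{z} (f_x − g_x)²) / z ). Then D(f_i, f_j) < D(f_i, f_k) if and only if E_{f_i}[R(f_j)] > E_{f_i}[R(f_k)], where E_f[R(g)] = Σ_{e=1}^{z} f_e · R(g, e). That is, the quadratic scoring rule is effective with respect to the root-mean-square deviation D. -/

import Mathlib

open Finset

/-- A probability vector: nonnegative entries summing to 1. -/
def ProbVec {z : ℕ} (f : Fin z → ℝ) : Prop :=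
  (∀ k, 0 ≤ f k) ∧ ∑ k, f k = 1

/-- The quadratic scoring rule: `R(f, e) = 2 f_e − Σ_k f_k²`. -/
noncomputable def QSR {z : ℕ} (f : Fin z → ℝ) (e : Fin z) : ℝ :=
  2 * f e - ∑ k, f k ^ 2

/-- The `f`-expected score of reporting `g` under the quadratic scoring rule. -/
noncomputable def expScore {z : ℕ} (f g : Fin z → ℝ) : ℝ :=
  ∑ e, f e * QSR g e

/-- Root-mean-square deviation between two opinions. -/
noncomputable def D {z : ℕ} (f g : Fin z → ℝ) : ℝ :=
  Real.sqrt ((∑ k, (f k - g k) ^ 2) / z)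

/-!
Under `f`, the expected quadratic score of a report `g` is `‖f‖² - ‖f - g‖²`, so a higher
expected score means a smaller squared Euclidean distance to `f`; and `D` is a strictly
increasing function of that squared distance.
-/

theorem expScore_eq_sum_sq_sub_sum_sq_sub {z : ℕ} (f g : Fin z → ℝ) (hf : ∑ k, f k = 1) :
    expScore f g = ∑ k, f k ^ 2 - ∑ k, (f k - g k) ^ 2 := by
  have hsq : ∑ k, (f k - g k) ^ 2 = ∑ k, f k ^ 2 - 2 * ∑ k, f k * g k + ∑ k, g k ^ 2 := by
    simp only [sub_sq, sum_add_distrib, sum_sub_distrib, mul_sum, mul_assoc]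
  calc expScore f g = 2 * ∑ k, f k * g k - (∑ k, f k) * ∑ k, g k ^ 2 := by
        simp only [expScore, QSR, mul_sub, sum_sub_distrib, ← sum_mul, mul_left_comm _ (2 : ℝ),
          ← mul_sum]
    _ = ∑ k, f k ^ 2 - ∑ k, (f k - g k) ^ 2 := by rw [hf, hsq]; ring

theorem D_lt_D_iff_sum_sq_lt {z : ℕ} (f g h : Fin z → ℝ) :
    D f g < D f h ↔ ∑ k, (f k - g k) ^ 2 < ∑ k, (f k - h k) ^ 2 := by
  rcases z.eq_zero_or_pos with rfl | hz
  · simp [D]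
  rw [D, D, Real.sqrt_lt_sqrt_iff (by positivity), div_lt_div_iff_of_pos_right (by positivity)]

theorem quadratic_effective_wrt_rmsd_general {z : ℕ}
    (fi fj fk : Fin z → ℝ) (hfi : ProbVec fi) :
    D fi fj < D fi fk ↔ expScore fi fj > expScore fi fk := by
  rw [D_lt_D_iff_sum_sq_lt, gt_iff_lt, expScore_eq_sum_sq_sub_sum_sq_sub fi fj hfi.2,
    expScore_eq_sum_sq_sub_sum_sq_sub fi fk hfi.2, sub_lt_sub_iff_left]

/-- The quadratic scoring rule is effective with respect to the
root-mean-square deviation `D`. -/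
theorem quadratic_effective_wrt_rmsd {z : ℕ} (hz : 2 ≤ z)
    (fi fj fk : Fin z → ℝ) (hfi : ProbVec fi) (hfj : ProbVec fj) (hfk : ProbVec fk) :
    D fi fj < D fi fk ↔ expScore fi fj > expScore fi fk :=
  quadratic_effective_wrt_rmsd_general fi fj fk hfi
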